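/- arXiv:2007.00612 — 2 statements merged into one kernel-verified Lean document; each statement's English description precedes it below -/
import Mathlib

section
/- Let K be a compact convex subset of the Euclidean plane ℝ² with nonempty interior, let a ≤ b, and let φ : [a,b] → ℝ² be a continuous map of finite length such that K is contained in the convex hull K̃ of φ([a,b]), and such that φ has minimal length: for every c ≤ d and every continuous map ψ : [c,d] → ℝ² with K contained in the convex hull of ψ([c,d]), the length of φ on [a,b] is at most the length of ψ on [c,d]. Let α, β ∈ [a,b] be such that φ(α) and φ(β) are extreme points of K̃ with φ(α) ≠ φ(β). Then either the closed segment [φ(α), φ(β)] is contained in the boundary of K̃, or for every nonzero continuous linear functional f : ℝ² → ℝ and c ∈ ℝ with f(φ(α)) = f(φ(β)) = c, there exist points x₁, x₂ ∈ K with x₁ ∈ K̃ ∩ {x : f(x) ≤ c}, x₂ ∈ K̃ ∩ {x : f(x) ≥ c}, and x₁, x₂ ∉ [φ(α), φ(β)]. -/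
/-!
If `[φ α, φ β]` is not in the boundary of `K̃`, it meets the interior, so every line `f = c`
through it has points of `K̃`, hence of the curve, strictly on the side `f < c`. Were `K` contained
in the halfspace `H = {c ≤ f}`, project the curve onto `H`. In the plane the line meets `K̃` only in
the chord between the extreme points `φ α`, `φ β`, which lie on the curve and on the line, so
`K̃ ∩ H` is the convex hull of the curve points in `H`, and the projected curve still covers `K`.
But the projection is `1`-Lipschitz with Pythagorean defect the distance to `H`, and this
distance changes along the curve; by Minkowski's inequality on partitions the projected curve is
strictly shorter, contradicting minimality.
-/

open Set
open Finset (range)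
open scoped RealInnerProductSpace

lemma sq_sub_max_zero_le (a b : ℝ) :
    (max a 0 - max b 0) ^ 2 ≤ (max a 0 - max b 0) * (a - b) := by
  rcases le_total a 0 with ha | ha <;> rcases le_total b 0 with hb | hb <;>
    simp only [max_eq_left, max_eq_right, ha, hb] <;> nlinarith

section HalfspaceProj

variable {E : Type*} [NormedAddCommGroup E] [InnerProductSpace ℝ E] (v : E) (c : ℝ)

noncomputable def halfspaceDist (x : E) : ℝ := max (c - ⟪v, x⟫) 0 / ‖v‖

/-- The nearest-point projection onto `{x | c ≤ ⟪v, x⟫}` (the identity when `v = 0`). -/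
noncomputable def halfspaceProj (x : E) : E := x + (halfspaceDist v c x / ‖v‖) • v

variable {v c}

lemma halfspaceDist_eq_zero {x : E} (h : c ≤ ⟪v, x⟫) : halfspaceDist v c x = 0 := by
  simp [halfspaceDist, h]

lemma halfspaceProj_eq_self {x : E} (h : c ≤ ⟪v, x⟫) : halfspaceProj v c x = x := by
  simp [halfspaceProj, halfspaceDist_eq_zero h]

lemma halfspaceDist_pos {x : E} (hv : v ≠ 0) (h : ⟪v, x⟫ < c) : 0 < halfspaceDist v c x :=
  div_pos (lt_max_of_lt_left (by linarith)) (norm_pos_iff.mpr hv)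

lemma dist_halfspaceProj_sq_add_le (x y : E) :
    dist (halfspaceProj v c x) (halfspaceProj v c y) ^ 2 +
      (halfspaceDist v c x - halfspaceDist v c y) ^ 2 ≤ dist x y ^ 2 := by
  set d := max (c - ⟪v, x⟫) 0 - max (c - ⟪v, y⟫) 0
  have hproj : halfspaceProj v c x - halfspaceProj v c y = (x - y) + (d / ‖v‖ ^ 2) • v := by
    simp only [halfspaceProj, halfspaceDist, d]
    module
  have hdist : halfspaceDist v c x - halfspaceDist v c y = d / ‖v‖ := by
    simp only [halfspaceDist, d, sub_div]
  have hinner : ⟪x - y, v⟫ = -((c - ⟪v, x⟫) - (c - ⟪v, y⟫)) := by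
    rw [inner_sub_left, real_inner_comm x, real_inner_comm y]; ring
  have hkey : d ^ 2 / ‖v‖ ^ 2 ≤ d * ((c - ⟪v, x⟫) - (c - ⟪v, y⟫)) / ‖v‖ ^ 2 :=
    div_le_div_of_nonneg_right (sq_sub_max_zero_le _ _) (sq_nonneg _)
  rw [dist_eq_norm, dist_eq_norm, hproj, hdist, norm_add_sq_real, real_inner_smul_right,
    norm_smul, hinner, mul_pow, Real.norm_eq_abs, sq_abs, div_pow]
  rcases eq_or_ne ‖v‖ 0 with hv | hv
  · simp [hv]
  · field_simp
    field_simp at hkey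
    nlinarith

end HalfspaceProj

lemma sqrt_sq_sum_add_sq_sum_le {ι : Type*} (s : Finset ι) (a b : ι → ℝ) :
    √((∑ i ∈ s, a i) ^ 2 + (∑ i ∈ s, b i) ^ 2) ≤ ∑ i ∈ s, √(a i ^ 2 + b i ^ 2) := by
  have h := norm_sum_le s fun i => (a i : ℂ) + b i * Complex.I
  rw [Finset.sum_add_distrib, ← Finset.sum_mul, ← Complex.ofReal_sum, ← Complex.ofReal_sum,
    Complex.norm_add_mul_I] at h
  simpa only [Complex.norm_add_mul_I] using h

lemma add_sq_div_le_of_sq_add_sq_le {A B L ε : ℝ} (hA : 0 ≤ A) (hB : 0 ≤ B) (hBL : B ≤ L)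
    (hε : 0 < ε) (h : A ^ 2 + ε ^ 2 ≤ B ^ 2) : A + ε ^ 2 / (2 * (L + ε)) ≤ B := by
  have hAB : A ≤ B := pow_le_pow_iff_left₀ hA hB two_ne_zero |>.mp (by nlinarith)
  have hL : 0 < L + ε := by linarith
  rw [← le_sub_iff_add_le', div_le_iff₀ (by positivity)]
  nlinarith

section Variation

variable {α E F : Type*} [LinearOrder α] [PseudoMetricSpace E] [PseudoMetricSpace F]

lemma sq_sum_dist_comp_add_sq_le {g : E → F} {m : E → ℝ}
    (hg : ∀ x y, dist (g x) (g y) ^ 2 + (m x - m y) ^ 2 ≤ dist x y ^ 2) (x : ℕ → E) (N : ℕ) :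
    (∑ i ∈ range N, dist (g (x (i + 1))) (g (x i))) ^ 2 + (m (x N) - m (x 0)) ^ 2 ≤
      (∑ i ∈ range N, dist (x (i + 1)) (x i)) ^ 2 := by
  have htel : |m (x N) - m (x 0)| ≤ ∑ i ∈ range N, |m (x (i + 1)) - m (x i)| := by
    rw [← Finset.sum_range_sub (fun i => m (x i))]
    exact Finset.abs_sum_le_sum_abs _ _
  have hpt : ∀ i, √(dist (g (x (i + 1))) (g (x i)) ^ 2 + |m (x (i + 1)) - m (x i)| ^ 2) ≤
      dist (x (i + 1)) (x i) := fun i => by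
    rw [sq_abs]
    exact (Real.sqrt_le_sqrt (hg _ _)).trans_eq (Real.sqrt_sq dist_nonneg)
  have hmink := (sqrt_sq_sum_add_sq_sum_le (range N) _ _).trans (Finset.sum_le_sum fun i _ => hpt i)
  have hsum : 0 ≤ ∑ i ∈ range N, dist (x (i + 1)) (x i) := Finset.sum_nonneg fun _ _ => dist_nonneg
  rw [Real.sqrt_le_left hsum] at hmink
  have hsq : (m (x N) - m (x 0)) ^ 2 ≤ (∑ i ∈ range N, |m (x (i + 1)) - m (x i)|) ^ 2 := by
    rw [← sq_abs]
    exact pow_le_pow_left₀ (abs_nonneg _) htel 2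
  linarith

lemma exists_monotone_endpoints_sum_le (f : α → E) {u w : α} (huw : u ≤ w) {n : ℕ}
    {p : ℕ → α} (hp : Monotone p) (hpI : ∀ i, p i ∈ Icc u w) :
    ∃ q : ℕ → α, Monotone q ∧ (∀ i, q i ∈ Icc u w) ∧ q 0 = u ∧ q (n + 2) = w ∧
      ∑ i ∈ range n, edist (f (p (i + 1))) (f (p i)) ≤
        ∑ i ∈ range (n + 2), edist (f (q (i + 1))) (f (q i)) := by
  set q : ℕ → α := fun i => if i = 0 then u else if n + 1 < i then w else p (i - 1)
  refine ⟨q, fun i j hij => ?_, fun i => ?_, rfl, by simp [q], ?_⟩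
  · simp only [q]
    split_ifs <;> first
      | omega
      | exact le_rfl
      | exact huw
      | exact (hpI _).1
      | exact (hpI _).2
      | exact hp (by omega)
  · simp only [q]
    split_ifs
    exacts [⟨le_rfl, huw⟩, ⟨huw, le_rfl⟩, hpI _]
  · rw [Finset.sum_range_succ, Finset.sum_range_succ']
    refine le_add_right (le_add_right (Finset.sum_le_sum fun i hi => ?_))
    have hi := Finset.mem_range.mp hi
    simp only [q]
    rw [if_neg (by omega), if_neg (by omega), if_neg (by omega), if_neg (by omega)]
    simp

lemma sum_edist_eq_ofReal_sum_dist {ι : Type*} (s : Finset ι) (x y : ι → E) :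
    ∑ i ∈ s, edist (x i) (y i) = ENNReal.ofReal (∑ i ∈ s, dist (x i) (y i)) := by
  rw [ENNReal.ofReal_sum_of_nonneg fun _ _ => dist_nonneg]
  simp only [edist_dist]

lemma lipschitzWith_one_of_sq_add_sq_le {g : E → F} {m : E → ℝ}
    (hg : ∀ x y, dist (g x) (g y) ^ 2 + (m x - m y) ^ 2 ≤ dist x y ^ 2) : LipschitzWith 1 g :=
  LipschitzWith.of_dist_le_mul fun x y => by
    rw [NNReal.coe_one, one_mul]
    exact abs_le_of_sq_le_sq' (by nlinarith [hg x y]) dist_nonneg |>.2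

lemma eVariationOn_comp_le {g : E → F} (hg : LipschitzWith 1 g) (φ : α → E) (s : Set α) :
    eVariationOn (g ∘ φ) s ≤ eVariationOn φ s := by
  simpa using (hg.lipschitzOnWith (s := univ)).comp_eVariationOn_le (mapsTo_univ φ s)

lemma eVariationOn_comp_Icc_lt {g : E → F} {m : E → ℝ}
    (hg : ∀ x y, dist (g x) (g y) ^ 2 + (m x - m y) ^ 2 ≤ dist x y ^ 2) {φ : α → E} {u w : α}
    (huw : u ≤ w) (hm : m (φ u) ≠ m (φ w)) (hfin : eVariationOn φ (Icc u w) ≠ ⊤) :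
    eVariationOn (g ∘ φ) (Icc u w) < eVariationOn φ (Icc u w) := by
  set L := (eVariationOn φ (Icc u w)).toReal
  set ε := |m (φ w) - m (φ u)|
  have hε : 0 < ε := abs_pos.mpr (sub_ne_zero.mpr hm.symm)
  set δ := ε ^ 2 / (2 * (L + ε))
  have hδ : 0 < δ := by positivity
  have hgφ : eVariationOn (g ∘ φ) (Icc u w) ≠ ⊤ :=
    ne_top_of_le_ne_top hfin (eVariationOn_comp_le (lipschitzWith_one_of_sq_add_sq_le hg) φ _)
  suffices eVariationOn (g ∘ φ) (Icc u w) + ENNReal.ofReal δ ≤ eVariationOn φ (Icc u w) from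
    (ENNReal.lt_add_right hgφ (ENNReal.ofReal_pos.mpr hδ).ne').trans_le this
  have := eVariationOn.nonempty_monotone_mem (Set.nonempty_Icc.mpr huw)
  rw [eVariationOn, ENNReal.iSup_add]
  refine iSup_le fun ⟨n, p, hp, hpI⟩ => ?_
  obtain ⟨q, hq, hqI, hq0, hqN, hpq⟩ := exists_monotone_endpoints_sum_le (g ∘ φ) huw (n := n) hp hpI
  have hφq : ∑ i ∈ range (n + 2), edist (φ (q (i + 1))) (φ (q i)) ≤ eVariationOn φ (Icc u w) :=
    eVariationOn.sum_le hq hqI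
  rw [sum_edist_eq_ofReal_sum_dist] at hφq
  have hgap : ∑ i ∈ range (n + 2), dist (g (φ (q (i + 1)))) (g (φ (q i))) + δ ≤
      ∑ i ∈ range (n + 2), dist (φ (q (i + 1))) (φ (q i)) := by
    refine add_sq_div_le_of_sq_add_sq_le (Finset.sum_nonneg fun _ _ => dist_nonneg)
      (Finset.sum_nonneg fun _ _ => dist_nonneg) ((ENNReal.ofReal_le_iff_le_toReal hfin).mp hφq)
      hε ?_
    have := sq_sum_dist_comp_add_sq_le hg (φ ∘ q) (n + 2)
    rw [sq_abs]
    simpa only [Function.comp_apply, hq0, hqN] using this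
  calc ∑ i ∈ range n, edist ((g ∘ φ) (p (i + 1))) ((g ∘ φ) (p i)) + ENNReal.ofReal δ
      ≤ ∑ i ∈ range (n + 2), edist ((g ∘ φ) (q (i + 1))) ((g ∘ φ) (q i)) + ENNReal.ofReal δ := by
        gcongr
    _ = ENNReal.ofReal (∑ i ∈ range (n + 2), dist (g (φ (q (i + 1)))) (g (φ (q i))) + δ) := by
        rw [sum_edist_eq_ofReal_sum_dist,
          ENNReal.ofReal_add (Finset.sum_nonneg fun _ _ => dist_nonneg) hδ.le]
        rfl
    _ ≤ eVariationOn φ (Icc u w) := (ENNReal.ofReal_le_ofReal hgap).trans hφq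

lemma eVariationOn_Icc_eq_add_add (f : α → E) {a u w b : α} (hau : a ≤ u) (huw : u ≤ w)
    (hwb : w ≤ b) :
    eVariationOn f (Icc a b) =
      eVariationOn f (Icc a u) + (eVariationOn f (Icc u w) + eVariationOn f (Icc w b)) := by
  have h₁ := eVariationOn.Icc_add_Icc f huw hwb (mem_univ w)
  have h₂ := eVariationOn.Icc_add_Icc f hau (huw.trans hwb) (mem_univ u)
  simp only [univ_inter] at h₁ h₂
  rw [h₁, h₂]

lemma eVariationOn_comp_lt {g : E → F} {m : E → ℝ}
    (hg : ∀ x y, dist (g x) (g y) ^ 2 + (m x - m y) ^ 2 ≤ dist x y ^ 2) {φ : α → E} {a b u w : α}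
    (hu : u ∈ Icc a b) (hw : w ∈ Icc a b) (hm : m (φ u) ≠ m (φ w))
    (hfin : eVariationOn φ (Icc a b) ≠ ⊤) :
    eVariationOn (g ∘ φ) (Icc a b) < eVariationOn φ (Icc a b) := by
  wlog huw : u ≤ w generalizing u w
  · exact this hw hu hm.symm (le_of_not_ge huw)
  have hle := eVariationOn_comp_le (lipschitzWith_one_of_sq_add_sq_le hg) φ
  have hfin' : ∀ {s}, s ⊆ Icc a b → eVariationOn φ s ≠ ⊤ := fun hs =>
    ne_top_of_le_ne_top hfin (eVariationOn.mono φ hs)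
  rw [eVariationOn_Icc_eq_add_add φ hu.1 huw hw.2, eVariationOn_Icc_eq_add_add _ hu.1 huw hw.2]
  refine ENNReal.add_lt_add_of_le_of_lt (ne_top_of_le_ne_top (hfin' (Icc_subset_Icc le_rfl hu.2))
    (hle _)) (hle _) (ENNReal.add_lt_add_of_lt_of_le ?_ ?_ (hle _))
  · exact ne_top_of_le_ne_top (hfin' (Icc_subset_Icc hw.1 le_rfl)) (hle _)
  · exact eVariationOn_comp_Icc_lt hg huw hm (hfin' (Icc_subset_Icc hu.1 hw.2))

end Variation

lemma collinear_setOf_eq {k E : Type*} [Field k] [AddCommGroup E] [Module k E]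
    [FiniteDimensional k E] (hE : Module.finrank k E = 2) {f : E →ₗ[k] k} (hf : f ≠ 0) (c : k) :
    Collinear k {x | f x = c} := by
  have hspan : vectorSpan k {x | f x = c} ≤ LinearMap.ker f := by
    refine Submodule.span_le.mpr ?_
    rintro _ ⟨x, hx, y, hy, rfl⟩
    simp_all [LinearMap.mem_ker]
  have hker : Module.finrank k (LinearMap.ker f) < 2 :=
    hE ▸ Submodule.finrank_lt (LinearMap.ker_eq_top.not.mpr hf)
  rw [collinear_iff_finrank_le_one]
  have := Submodule.finrank_mono hspan
  omega

section Convex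

variable {𝕜 E : Type*} [Field 𝕜] [LinearOrder 𝕜] [IsStrictOrderedRing 𝕜] [AddCommGroup E]
  [Module 𝕜 E]

lemma mem_segment_of_collinear_of_mem_extremePoints {A : Set E} {x y z : E}
    (hcol : Collinear 𝕜 {x, y, z}) (hx : x ∈ A.extremePoints 𝕜) (hy : y ∈ A.extremePoints 𝕜)
    (hxy : x ≠ y) (hz : z ∈ A) : z ∈ segment 𝕜 x y := by
  rcases hcol.wbtw_or_wbtw_or_wbtw with h | h | h
  · rcases eq_or_ne y z with rfl | hyz
    · exact right_mem_segment 𝕜 x y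
    have := mem_openSegment_of_ne_left_right hxy hyz.symm (mem_segment_iff_wbtw.mpr h)
    exact absurd (hy.2 hx.1 hz this) hxy
  · rw [segment_symm]
    exact mem_segment_iff_wbtw.mpr h
  · rcases eq_or_ne z x with rfl | hzx
    · exact left_mem_segment 𝕜 z y
    have := mem_openSegment_of_ne_left_right hzx hxy.symm (mem_segment_iff_wbtw.mpr h)
    exact absurd (hx.2 hz hy.1 this) hzx

lemma convexHull_inter_halfspace_subset (f : E →ₗ[𝕜] 𝕜) {S : Set E} {c : 𝕜}
    (h : convexHull 𝕜 S ∩ {x | f x = c} ⊆ convexHull 𝕜 (S ∩ {x | c ≤ f x})) :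
    convexHull 𝕜 S ∩ {x | c ≤ f x} ⊆ convexHull 𝕜 (S ∩ {x | c ≤ f x}) := by
  set H := {x | c ≤ f x}
  rintro x ⟨hxS, hcx : c ≤ f x⟩
  rcases (S \ H).eq_empty_or_nonempty with hbelow | hbelow
  · rwa [inter_eq_self_of_subset_left (sdiff_eq_empty.mp hbelow)]
  rcases (S ∩ H).eq_empty_or_nonempty with habove | habove
  · have hS : S ⊆ {x | f x < c} := fun y hy => not_le.mp fun hy' => habove.subset ⟨hy, hy'⟩
    exact absurd (convexHull_min hS (convex_halfSpace_lt f.isLinear c) hxS) (not_lt.mpr hcx)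
  have hjoin : x ∈ convexJoin 𝕜 (convexHull 𝕜 (S ∩ H)) (convexHull 𝕜 (S \ H)) := by
    rwa [← convexHull_union habove hbelow, inter_union_sdiff]
  obtain ⟨a, ha, b, hb, hxab⟩ := mem_convexJoin.mp hjoin
  have hfb : f b < c :=
    convexHull_min (fun y hy => not_le.mp hy.2) (convex_halfSpace_lt f.isLinear c) hb
  -- the point where `[x, b]` crosses the hyperplane `f = c`
  have hgap : 0 < f x - f b := by linarith
  set r := (f x - c) / (f x - f b)
  set y := AffineMap.lineMap x b r
  have hxyb : Wbtw 𝕜 x y b :=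
    ⟨r, ⟨div_nonneg (by linarith) hgap.le, div_le_one_of_le₀ (by linarith) hgap.le⟩, rfl⟩
  have hfy : f y = c := by
    simp only [y, r, AffineMap.lineMap_apply_module, map_add, map_smul, smul_eq_mul]
    field_simp
    ring
  have hyS : y ∈ convexHull 𝕜 S :=
    (convex_convexHull 𝕜 S).segment_subset hxS (convexHull_mono sdiff_subset hb)
      (mem_segment_iff_wbtw.mpr hxyb)
  have hyxa : Wbtw 𝕜 y x a :=
    (mem_segment_iff_wbtw.mp hxab).symm.trans_left_right hxyb.symm
  exact (convex_convexHull 𝕜 _).segment_subset (h ⟨hyS, hfy⟩) ha (mem_segment_iff_wbtw.mpr hyxa)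

lemma convexHull_inter_halfspace_subset_of_mem_extremePoints [FiniteDimensional 𝕜 E]
    (hE : Module.finrank 𝕜 E = 2) {f : E →ₗ[𝕜] 𝕜} (hf : f ≠ 0) {S : Set E} {B D : E}
    (hB : B ∈ (convexHull 𝕜 S).extremePoints 𝕜) (hD : D ∈ (convexHull 𝕜 S).extremePoints 𝕜)
    (hBD : B ≠ D) {c : 𝕜} (hfB : f B = c) (hfD : f D = c) :
    convexHull 𝕜 S ∩ {x | c ≤ f x} ⊆ convexHull 𝕜 (S ∩ {x | c ≤ f x}) := by
  refine convexHull_inter_halfspace_subset f fun z ⟨hz, hfz⟩ => ?_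
  have hcol : Collinear 𝕜 {B, D, z} := (collinear_setOf_eq hE hf c).subset <|
    insert_subset hfB (insert_subset hfD (singleton_subset_iff.mpr hfz))
  have hmem : ∀ {P}, P ∈ (convexHull 𝕜 S).extremePoints 𝕜 → f P = c →
      P ∈ convexHull 𝕜 (S ∩ {x | c ≤ f x}) := fun hP hfP =>
    subset_convexHull 𝕜 _ ⟨extremePoints_convexHull_subset hP, hfP.ge⟩
  exact (convex_convexHull 𝕜 _).segment_subset (hmem hB hfB) (hmem hD hfD)
    (mem_segment_of_collinear_of_mem_extremePoints hcol hB hD hBD hz)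

end Convex

lemma exists_lt_of_mem_interior_convexHull {V : Type*} [AddCommGroup V] [Module ℝ V]
    [TopologicalSpace V] [IsTopologicalAddGroup V] [ContinuousSMul ℝ V] {f : V →L[ℝ] ℝ}
    (hf : f ≠ 0) {S : Set V} {p : V} (hp : p ∈ interior (convexHull ℝ S)) : ∃ s ∈ S, f s < f p := by
  by_contra! h
  have hS : convexHull ℝ S ⊆ f ⁻¹' Ici (f p) :=
    convexHull_min h (convex_halfSpace_ge f.isLinear _)
  have := interior_mono hS hp
  rw [← (f.isOpenMap_of_ne_zero hf).preimage_interior_eq_interior_preimage f.continuous,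
    interior_Ici] at this
  exact lt_irrefl (f p) this

lemma exists_mem_le_notMem_segment_of_shortest {E : Type*} [NormedAddCommGroup E]
    [InnerProductSpace ℝ E] [FiniteDimensional ℝ E] (hE : Module.finrank ℝ E = 2) {K : Set E}
    {a b : ℝ} {φ : ℝ → E} (hφcont : ContinuousOn φ (Icc a b))
    (hφfin : eVariationOn φ (Icc a b) ≠ ⊤) (hcover : K ⊆ convexHull ℝ (φ '' Icc a b))
    (hmin : ∀ ψ : ℝ → E, ContinuousOn ψ (Icc a b) → K ⊆ convexHull ℝ (ψ '' Icc a b) →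
      eVariationOn φ (Icc a b) ≤ eVariationOn ψ (Icc a b))
    {α β : ℝ} (hα : α ∈ Icc a b)
    (hαext : φ α ∈ (convexHull ℝ (φ '' Icc a b)).extremePoints ℝ)
    (hβext : φ β ∈ (convexHull ℝ (φ '' Icc a b)).extremePoints ℝ) (hne : φ α ≠ φ β)
    (f : E →L[ℝ] ℝ) (hf : f ≠ 0) (c : ℝ) (hfα : f (φ α) = c) (hfβ : f (φ β) = c)
    {p : E} (hp : p ∈ interior (convexHull ℝ (φ '' Icc a b))) (hfp : f p = c) :
    ∃ x ∈ K, f x ≤ c ∧ x ∉ segment ℝ (φ α) (φ β) := by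
  by_contra! hK
  have hKH : K ⊆ {x | c ≤ f x} := fun x hx => not_lt.mp fun hlt =>
    hlt.ne ((convex_hyperplane f.isLinear c).segment_subset hfα hfβ (hK x hx hlt.le))
  obtain ⟨_, ⟨t, ht, rfl⟩, hft⟩ := exists_lt_of_mem_interior_convexHull hf hp
  set v := (InnerProductSpace.toDual ℝ E).symm f
  have hv : ∀ x, ⟪v, x⟫ = f x := fun x => InnerProductSpace.toDual_symm_apply
  have hv0 : v ≠ 0 := by simpa [v] using hf
  have hψcover : K ⊆ convexHull ℝ ((halfspaceProj v c ∘ φ) '' Icc a b) := by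
    refine fun x hx => convexHull_mono ?_ (convexHull_inter_halfspace_subset_of_mem_extremePoints
      hE (f := f.toLinearMap) (ContinuousLinearMap.coe_injective.ne hf) hαext hβext hne hfα hfβ
      ⟨hcover hx, hKH hx⟩)
    rintro _ ⟨⟨s, hs, rfl⟩, hcs⟩
    exact ⟨s, hs, halfspaceProj_eq_self ((hv _).symm ▸ hcs)⟩
  have hlt : eVariationOn (halfspaceProj v c ∘ φ) (Icc a b) < eVariationOn φ (Icc a b) := by
    refine eVariationOn_comp_lt dist_halfspaceProj_sq_add_le hα ht ?_ hφfin
    rw [halfspaceDist_eq_zero (by rw [hv, hfα])]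
    exact (halfspaceDist_pos hv0 (by rw [hv]; linarith)).ne
  have hψcont : ContinuousOn (halfspaceProj v c ∘ φ) (Icc a b) :=
    (lipschitzWith_one_of_sq_add_sq_le dist_halfspaceProj_sq_add_le).continuous.comp_continuousOn
      hφcont
  exact (hmin _ hψcont hψcover).not_gt hlt

theorem segment_in_boundary_or_line_divides_general
    (K : Set (EuclideanSpace ℝ (Fin 2)))
    (a b : ℝ) (hab : a ≤ b)
    (φ : ℝ → EuclideanSpace ℝ (Fin 2)) (hφcont : ContinuousOn φ (Set.Icc a b))
    (hφfin : eVariationOn φ (Set.Icc a b) ≠ ⊤)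
    (hcover : K ⊆ convexHull ℝ (φ '' Set.Icc a b))
    (hmin : ∀ (c d : ℝ), c ≤ d →
      ∀ ψ : ℝ → EuclideanSpace ℝ (Fin 2), ContinuousOn ψ (Set.Icc c d) →
        K ⊆ convexHull ℝ (ψ '' Set.Icc c d) →
        eVariationOn φ (Set.Icc a b) ≤ eVariationOn ψ (Set.Icc c d))
    (α β : ℝ) (hα : α ∈ Set.Icc a b)
    (hαext : φ α ∈ Set.extremePoints ℝ (convexHull ℝ (φ '' Set.Icc a b)))
    (hβext : φ β ∈ Set.extremePoints ℝ (convexHull ℝ (φ '' Set.Icc a b)))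
    (hne : φ α ≠ φ β) :
    segment ℝ (φ α) (φ β) ⊆ frontier (convexHull ℝ (φ '' Set.Icc a b)) ∨
    (∀ (f : EuclideanSpace ℝ (Fin 2) →L[ℝ] ℝ), f ≠ 0 → ∀ c : ℝ,
      f (φ α) = c → f (φ β) = c →
      (∃ x₁ ∈ K, x₁ ∈ convexHull ℝ (φ '' Set.Icc a b) ∩ {x | f x ≤ c} ∧
        x₁ ∉ segment ℝ (φ α) (φ β)) ∧
      (∃ x₂ ∈ K, x₂ ∈ convexHull ℝ (φ '' Set.Icc a b) ∩ {x | c ≤ f x} ∧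
        x₂ ∉ segment ℝ (φ α) (φ β))) := by
  refine or_iff_not_imp_left.mpr fun hbd f hf c hfα hfβ => ?_
  obtain ⟨p, hpseg, hpfr⟩ := not_subset.mp hbd
  have hp : p ∈ interior (convexHull ℝ (φ '' Icc a b)) := by
    by_contra hpint
    exact hpfr ⟨subset_closure ((convex_convexHull ℝ _).segment_subset hαext.1 hβext.1 hpseg),
      hpint⟩
  have hfp : f p = c := (convex_hyperplane f.isLinear c).segment_subset hfα hfβ hpseg
  have side := exists_mem_le_notMem_segment_of_shortest finrank_euclideanSpace_fin
    hφcont hφfin hcover (hmin a b hab) hα hαext hβext hne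
  obtain ⟨x₁, hx₁, hfx₁, hx₁seg⟩ := side f hf c hfα hfβ hp hfp
  obtain ⟨x₂, hx₂, hfx₂, hx₂seg⟩ := side (-f) (neg_ne_zero.mpr hf) (-c) (by simp [hfα])
    (by simp [hfβ]) hp (by simp [hfp])
  exact ⟨⟨x₁, hx₁, ⟨hcover hx₁, hfx₁⟩, hx₁seg⟩,
    ⟨x₂, hx₂, ⟨hcover hx₂, by simpa using hfx₂⟩, hx₂seg⟩⟩

/-- Proposition 5 of the paper: For a shortest curve `φ` whose convex
hull `K̃` covers `K`, and extreme points `φ(α) ≠ φ(β)` of `K̃`, either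
`[φ(α), φ(β)] ⊆ bd(K̃)` or every line through `φ(α)` and `φ(β)` divides `K̃` into
two parts, each containing a point of `K` outside the segment `[φ(α), φ(β)]`. -/
theorem segment_in_boundary_or_line_divides
    (K : Set (EuclideanSpace ℝ (Fin 2)))
    (hKcomp : IsCompact K) (hKconv : Convex ℝ K) (hKint : (interior K).Nonempty)
    (a b : ℝ) (hab : a ≤ b)
    (φ : ℝ → EuclideanSpace ℝ (Fin 2)) (hφcont : ContinuousOn φ (Set.Icc a b))
    (hφfin : eVariationOn φ (Set.Icc a b) ≠ ⊤)
    (hcover : K ⊆ convexHull ℝ (φ '' Set.Icc a b))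
    (hmin : ∀ (c d : ℝ), c ≤ d →
      ∀ ψ : ℝ → EuclideanSpace ℝ (Fin 2), ContinuousOn ψ (Set.Icc c d) →
        K ⊆ convexHull ℝ (ψ '' Set.Icc c d) →
        eVariationOn φ (Set.Icc a b) ≤ eVariationOn ψ (Set.Icc c d))
    (α β : ℝ) (hα : α ∈ Set.Icc a b) (hβ : β ∈ Set.Icc a b)
    (hαext : φ α ∈ Set.extremePoints ℝ (convexHull ℝ (φ '' Set.Icc a b)))
    (hβext : φ β ∈ Set.extremePoints ℝ (convexHull ℝ (φ '' Set.Icc a b)))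
    (hne : φ α ≠ φ β) :
    segment ℝ (φ α) (φ β) ⊆ frontier (convexHull ℝ (φ '' Set.Icc a b)) ∨
    (∀ (f : EuclideanSpace ℝ (Fin 2) →L[ℝ] ℝ), f ≠ 0 → ∀ c : ℝ,
      f (φ α) = c → f (φ β) = c →
      (∃ x₁ ∈ K, x₁ ∈ convexHull ℝ (φ '' Set.Icc a b) ∩ {x | f x ≤ c} ∧
        x₁ ∉ segment ℝ (φ α) (φ β)) ∧
      (∃ x₂ ∈ K, x₂ ∈ convexHull ℝ (φ '' Set.Icc a b) ∩ {x | c ≤ f x} ∧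
        x₂ ∉ segment ℝ (φ α) (φ β))) :=
  segment_in_boundary_or_line_divides_general K a b hab φ hφcont hφfin hcover hmin α β hα hαext
    hβext hne
end

section
/- Let K be a compact convex subset of the Euclidean plane ℝ² with nonempty interior, let A, B ∈ K with dist(A,B) = diam(K), and suppose γ ⊆ ℝ² satisfies γ ⊆ boundary(K) and boundary(K) = γ ∪ [A,B], where [A,B] is the closed segment between A and B. Let φ : [0,1] → ℝ² be a continuous map with φ(0) = A, φ(1) = B, φ injective, and φ([0,1]) = γ, and let per(K) be the length (total variation) on [0,1] of a continuous map β : ℝ → ℝ² with β(0) = β(1), β injective on [0,1) and image equal to the boundary of K. Then K is contained in the convex hull of γ and the length of φ on [0,1] equals per(K) − diam(K). -/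
/-!
Cutting the boundary loop `β` at `A` and `B` splits it into two arcs from `A` to `B` meeting
only at their endpoints. The arcs `γ` and `[A, B]` also cover the boundary; minus their endpoints
they are connected, so each lies in one of the two pieces, and they must be exactly the two
pieces. Arc length is independent of the parametrization (a continuous injective change of
parameter on an interval is monotone), so `per K = length γ + dist A B = length γ + diam K`.
For the inclusion, every point of a compact set lies on a chord joining two of its boundary
points, and `[A, B] ⊆ conv γ`.
-/

open Set Function

section Frontier

variable {α : Type*} [ConditionallyCompleteLinearOrder α] [TopologicalSpace α] [OrderTopology α]
  [DenselyOrdered α] {s : Set α}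

theorem IsCompact.sSup_mem_frontier [NoMaxOrder α] (hs : IsCompact s) (hne : s.Nonempty) :
    sSup s ∈ frontier s := by
  refine ⟨subset_closure (hs.sSup_mem hne), fun h => ?_⟩
  have := interior_mono (show s ⊆ Iic (sSup s) from fun _ => le_csSup hs.bddAbove) h
  exact lt_irrefl _ (interior_Iic (a := sSup s) ▸ this)

theorem IsCompact.sInf_mem_frontier [NoMinOrder α] (hs : IsCompact s) (hne : s.Nonempty) :
    sInf s ∈ frontier s := by
  refine ⟨subset_closure (hs.sInf_mem hne), fun h => ?_⟩
  have := interior_mono (show s ⊆ Ici (sInf s) from fun _ => csInf_le hs.bddBelow) h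
  exact lt_irrefl _ (interior_Ici (a := sInf s) ▸ this)

end Frontier

theorem IsCompact.subset_convexHull_frontier {E : Type*} [NormedAddCommGroup E]
    [NormedSpace ℝ E] [Nontrivial E] {K : Set E} (hK : IsCompact K) :
    K ⊆ convexHull ℝ (frontier K) := by
  intro x hx
  obtain ⟨y, hyx⟩ := exists_ne x
  let L : ℝ →ᵃ[ℝ] E := AffineMap.lineMap x y
  have hL : Continuous L := AffineMap.lineMap_continuous
  have hT : IsCompact (L ⁻¹' K) := Metric.isCompact_of_isClosed_isBounded
    (hK.isClosed.preimage hL)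
    ((antilipschitzWith_lineMap hyx.symm).isBounded_preimage hK.isBounded)
  have h0 : (0 : ℝ) ∈ L ⁻¹' K := by simpa [L] using hx
  have hmem : (0 : ℝ) ∈ segment ℝ (sInf (L ⁻¹' K)) (sSup (L ⁻¹' K)) := by
    rw [segment_eq_Icc ((csInf_le hT.bddBelow h0).trans (le_csSup hT.bddAbove h0))]
    exact ⟨csInf_le hT.bddBelow h0, le_csSup hT.bddAbove h0⟩
  have hx' : x ∈ segment ℝ (L (sInf (L ⁻¹' K))) (L (sSup (L ⁻¹' K))) := by
    rw [← image_segment]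
    exact ⟨0, hmem, AffineMap.lineMap_apply_zero x y⟩
  have hfr : ∀ t ∈ frontier (L ⁻¹' K), L t ∈ frontier K := fun t ht =>
    hL.frontier_preimage_subset K ht
  exact segment_subset_convexHull (hfr _ (hT.sInf_mem_frontier ⟨0, h0⟩))
    (hfr _ (hT.sSup_mem_frontier ⟨0, h0⟩)) hx'

section Variation

variable {X : Type*} [PseudoEMetricSpace X]

theorem eVariationOn_Icc_add_Icc {α : Type*} [LinearOrder α] (f : α → X) {a b c : α}
    (hab : a ≤ b) (hbc : b ≤ c) :
    eVariationOn f (Icc a b) + eVariationOn f (Icc b c) = eVariationOn f (Icc a c) := by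
  simpa using eVariationOn.Icc_add_Icc f (s := univ) hab hbc (mem_univ b)

theorem eVariationOn_comp_of_injOn_Icc (f : ℝ → X) {ψ : ℝ → ℝ} {a b : ℝ} (hab : a ≤ b)
    (hψc : ContinuousOn ψ (Icc a b)) (hψi : InjOn ψ (Icc a b)) :
    eVariationOn (f ∘ ψ) (Icc a b) = eVariationOn f (ψ '' Icc a b) := by
  rcases hψc.strictMonoOn_of_injOn_Icc' hab hψi with h | h
  · exact eVariationOn.comp_eq_of_monotoneOn f ψ h.monotoneOn
  · exact eVariationOn.comp_eq_of_antitoneOn f ψ h.antitoneOn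

theorem Function.Periodic.eVariationOn_Icc_add {f : ℝ → X} {c : ℝ} (hf : Periodic f c)
    {a : ℝ} (ha : a ∈ Icc 0 c) : eVariationOn f (Icc a (a + c)) = eVariationOn f (Icc 0 c) := by
  have hshift : eVariationOn f (Icc c (a + c)) = eVariationOn f (Icc 0 a) :=
    calc eVariationOn f (Icc c (a + c)) = eVariationOn f ((· + c) '' Icc 0 a) := by
          rw [image_add_const_Icc, zero_add]
      _ = eVariationOn (f ∘ (· + c)) (Icc 0 a) :=
          (eVariationOn.comp_eq_of_monotoneOn f _ ((monotone_id.add_const c).monotoneOn _)).symm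
      _ = eVariationOn f (Icc 0 a) := eVariationOn.eq_of_eqOn fun x _ => hf x
  rw [← eVariationOn_Icc_add_Icc f ha.2 (by linarith [ha.1]), hshift, add_comm,
    eVariationOn_Icc_add_Icc f ha.1 ha.2]

theorem eVariationOn_lineMap_Icc {E : Type*} [NormedAddCommGroup E] [NormedSpace ℝ E]
    (x y : E) :
    eVariationOn (AffineMap.lineMap x y : ℝ → E) (Icc 0 1) = edist x y := by
  refine le_antisymm ?_ ?_
  · calc eVariationOn (AffineMap.lineMap x y ∘ id : ℝ → E) (Icc 0 1)
        ≤ nndist x y * eVariationOn id (Icc (0 : ℝ) 1) :=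
          (lipschitzWith_lineMap x y).lipschitzOnWith.comp_eVariationOn_le (mapsTo_id _)
      _ = edist x y := by
          rw [eVariationOn_id_Icc, sub_zero, ENNReal.ofReal_one, mul_one, edist_nndist]
  · simpa using eVariationOn.edist_le (AffineMap.lineMap x y : ℝ → E)
      (left_mem_Icc.2 zero_le_one) (right_mem_Icc.2 zero_le_one)

end Variation

section Reparametrization

variable {X : Type*} [EMetricSpace X] {f g : ℝ → X} {a b c d : ℝ}

theorem exists_reparametrization_of_injOn_Icc (hab : a ≤ b)
    (hfc : ContinuousOn f (Icc a b)) (hgc : ContinuousOn g (Icc c d)) (hgi : InjOn g (Icc c d))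
    (him : f '' Icc a b = g '' Icc c d) :
    ∃ ψ : ℝ → ℝ, Continuous ψ ∧ ψ '' Icc a b = Icc c d ∧ EqOn f (g ∘ ψ) (Icc a b) := by
  have : CompactSpace (Icc c d) := isCompact_iff_compactSpace.mp isCompact_Icc
  let G : Icc c d → g '' Icc c d := (mapsTo_image g _).restrict
  have hG : Bijective G := ⟨fun s t hst => Subtype.ext (hgi s.2 t.2 (congrArg Subtype.val hst)),
    fun ⟨_, s, hs, hsz⟩ => ⟨⟨s, hs⟩, Subtype.ext hsz⟩⟩
  let e := (hgc.mapsToRestrict (mapsTo_image g _) : Continuous G).homeoOfEquivCompactToT2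
    (f := Equiv.ofBijective G hG)
  have hF : MapsTo f (Icc a b) (g '' Icc c d) := him ▸ mapsTo_image f _
  let F : Icc a b → g '' Icc c d := hF.restrict
  have hFs : Surjective F := fun ⟨_, hz⟩ => by
    obtain ⟨t, ht, rfl⟩ := him ▸ hz
    exact ⟨⟨t, ht⟩, rfl⟩
  refine ⟨IccExtend hab (Subtype.val ∘ e.symm ∘ F), ?_, ?_, fun t ht => ?_⟩
  · exact (continuous_subtype_val.comp (e.symm.continuous.comp (hfc.mapsToRestrict hF))).Icc_extend'
  · ext y
    constructor
    · rintro ⟨t, ht, rfl⟩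
      rw [IccExtend_of_mem hab _ ht]
      exact (e.symm _).2
    · intro hy
      obtain ⟨t, ht⟩ := hFs (e ⟨y, hy⟩)
      refine ⟨t, t.2, ?_⟩
      simp [IccExtend_of_mem hab _ t.2, ht]
  · rw [comp_apply, IccExtend_of_mem hab _ ht]
    exact (congrArg Subtype.val (e.apply_symm_apply (F ⟨t, ht⟩))).symm

theorem eVariationOn_Icc_eq_of_injOn_of_image_eq (hab : a ≤ b)
    (hfc : ContinuousOn f (Icc a b)) (hfi : InjOn f (Icc a b))
    (hgc : ContinuousOn g (Icc c d)) (hgi : InjOn g (Icc c d))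
    (him : f '' Icc a b = g '' Icc c d) :
    eVariationOn f (Icc a b) = eVariationOn g (Icc c d) := by
  obtain ⟨ψ, hψc, hψim, hfg⟩ := exists_reparametrization_of_injOn_Icc hab hfc hgc hgi him
  rw [eVariationOn.eq_of_eqOn hfg, eVariationOn_comp_of_injOn_Icc g hab hψc.continuousOn
    (hfi.congr hfg).of_comp, hψim]

end Reparametrization

theorem Set.pair_subset_image_Icc {α β : Type*} [Preorder α] (f : α → β) {a b : α}
    (hab : a ≤ b) : {f a, f b} ⊆ f '' Icc a b :=
  pair_subset (mem_image_of_mem f (left_mem_Icc.2 hab)) (mem_image_of_mem f (right_mem_Icc.2 hab))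

theorem Set.InjOn.image_Icc_sdiff_pair {α β : Type*} [PartialOrder α] {f : α → β} {a b : α}
    (hab : a ≤ b) (h : InjOn f (Icc a b)) : f '' Icc a b \ {f a, f b} = f '' Ioo a b := by
  rw [← Icc_sdiff_both, h.image_sdiff,
    inter_eq_right.2 (pair_subset (left_mem_Icc.2 hab) (right_mem_Icc.2 hab)), image_pair]

theorem Set.InjOn.nonempty_image_Icc_sdiff_pair {α β : Type*} [PartialOrder α]
    [DenselyOrdered α] {f : α → β} {a b : α} (hab : a < b) (h : InjOn f (Icc a b)) :
    (f '' Icc a b \ {f a, f b}).Nonempty := by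
  rw [h.image_Icc_sdiff_pair hab.le]
  exact (nonempty_Ioo.2 hab).image f

theorem ContinuousOn.isPreconnected_image_Icc_sdiff_pair {α β : Type*}
    [ConditionallyCompleteLinearOrder α] [DenselyOrdered α] [TopologicalSpace α] [OrderTopology α]
    [TopologicalSpace β] {f : α → β} {a b : α} (hab : a ≤ b) (hfc : ContinuousOn f (Icc a b))
    (hfi : InjOn f (Icc a b)) :
    IsPreconnected (f '' Icc a b \ {f a, f b}) := by
  rw [hfi.image_Icc_sdiff_pair hab]
  exact isPreconnected_Ioo.image f (hfc.mono Ioo_subset_Icc_self)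

theorem Set.eq_and_eq_of_sdiff_subset {α : Type*} {S₁ S₂ T₁ T₂ D : Set α} (hS : S₁ ∩ S₂ = D)
    (hST : S₁ ∪ S₂ = T₁ ∪ T₂) (hD₁ : D ⊆ T₁) (hD₂ : D ⊆ T₂) (h₁ : T₁ \ D ⊆ S₁)
    (h₂ : T₂ \ D ⊆ S₂) : S₁ = T₁ ∧ S₂ = T₂ := by
  simp only [Set.ext_iff, subset_def, mem_sdiff, mem_inter_iff, mem_union] at *
  grind

section TwoArcs

variable {X : Type*} [TopologicalSpace X] {S₁ S₂ T T₁ T₂ D : Set X}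

theorem IsPreconnected.subset_or_subset_of_inter_eq (hT : IsPreconnected (T \ D))
    (hc₁ : IsClosed S₁) (hc₂ : IsClosed S₂) (hS : S₁ ∩ S₂ = D) (hTS : T ⊆ S₁ ∪ S₂) :
    T \ D ⊆ S₁ ∨ T \ D ⊆ S₂ :=
  isPreconnected_iff_subset_of_disjoint_closed.1 hT S₁ S₂ hc₁ hc₂ (sdiff_subset.trans hTS)
    (by rw [hS, sdiff_inter_self])

theorem eq_and_eq_or_eq_and_eq_of_union_eq (hc₁ : IsClosed S₁) (hc₂ : IsClosed S₂)
    (hS : S₁ ∩ S₂ = D) (hST : S₁ ∪ S₂ = T₁ ∪ T₂) (hD₁ : D ⊆ T₁) (hD₂ : D ⊆ T₂)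
    (hT₁ : IsPreconnected (T₁ \ D)) (hT₂ : IsPreconnected (T₂ \ D))
    (hS₁ : (S₁ \ D).Nonempty) (hS₂ : (S₂ \ D).Nonempty) :
    (S₁ = T₁ ∧ S₂ = T₂) ∨ (S₁ = T₂ ∧ S₂ = T₁) := by
  rcases hT₁.subset_or_subset_of_inter_eq hc₁ hc₂ hS (hST ▸ subset_union_left) with h₁ | h₁ <;>
    rcases hT₂.subset_or_subset_of_inter_eq hc₁ hc₂ hS (hST ▸ subset_union_right) with h₂ | h₂
  · obtain ⟨z, hz, hzD⟩ := hS₂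
    have hzT : z ∈ T₁ ∪ T₂ := hST ▸ Or.inr hz
    exact absurd (hS ▸ ⟨hzT.elim (h₁ ⟨·, hzD⟩) (h₂ ⟨·, hzD⟩), hz⟩) hzD
  · exact .inl (eq_and_eq_of_sdiff_subset hS hST hD₁ hD₂ h₁ h₂)
  · exact .inr (eq_and_eq_of_sdiff_subset hS (hST.trans (union_comm _ _)) hD₂ hD₁ h₂ h₁)
  · obtain ⟨z, hz, hzD⟩ := hS₁
    have hzT : z ∈ T₁ ∪ T₂ := hST ▸ Or.inl hz
    exact absurd (hS ▸ ⟨hz, hzT.elim (h₁ ⟨·, hzD⟩) (h₂ ⟨·, hzD⟩)⟩) hzD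

end TwoArcs

section Loop

variable {X : Type*} {β : ℝ → X}

theorem periodic_comp_fract (β : ℝ → X) : Periodic (β ∘ Int.fract) 1 := fun t => by simp

theorem eqOn_comp_fract_Icc (hβ : β 0 = β 1) : EqOn (β ∘ Int.fract) β (Icc 0 1) := by
  intro t ht
  rcases ht.2.eq_or_lt with rfl | ht1
  · simp [hβ]
  · simp [Int.fract_eq_self.2 ⟨ht.1, ht1⟩]

theorem range_comp_fract (hβ : β 0 = β 1) : range (β ∘ Int.fract) = β '' Icc 0 1 := by
  rw [← (periodic_comp_fract β).image_Icc one_pos 0, zero_add, (eqOn_comp_fract_Icc hβ).image_eq]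

theorem injOn_comp_fract (hβ : InjOn β (Ico 0 1)) {s : Set ℝ}
    (hs : ∀ x ∈ s, ∀ y ∈ s, |x - y| < 1) : InjOn (β ∘ Int.fract) s := by
  intro x hx y hy hxy
  obtain ⟨z, hz⟩ := Int.fract_eq_fract.1 <|
    hβ ⟨Int.fract_nonneg x, Int.fract_lt_one x⟩ ⟨Int.fract_nonneg y, Int.fract_lt_one y⟩ hxy
  have hz1 : |(z : ℝ)| < 1 := hz ▸ hs x hx y hy
  have hz0 : z = 0 := Int.abs_lt_one_iff.1 (by exact_mod_cast hz1)
  rw [hz0, Int.cast_zero, sub_eq_zero] at hz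
  exact hz

theorem image_Icc_inter_image_Icc_of_injOn_Ico {P : ℝ → X} {s t u : ℝ} (hP : InjOn P (Ico s u))
    (hPu : P u = P s) (hst : s ≤ t) (htu : t ≤ u) :
    P '' Icc s t ∩ P '' Icc t u = {P s, P t} := by
  ext z
  constructor
  · rintro ⟨⟨v, hv, rfl⟩, w, hw, hwv⟩
    rcases hw.2.eq_or_lt with rfl | hwu
    · exact .inl (hwv.symm.trans hPu)
    · have := hP ⟨hst.trans hw.1, hwu⟩ ⟨hv.1, hv.2.trans_lt (hw.1.trans_lt hwu)⟩ hwv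
      exact .inr (by rw [le_antisymm hv.2 (this ▸ hw.1)]; rfl)
  · rintro (rfl | rfl)
    · exact ⟨⟨s, left_mem_Icc.2 hst, rfl⟩, u, right_mem_Icc.2 htu, hPu⟩
    · exact ⟨⟨t, right_mem_Icc.2 hst, rfl⟩, t, left_mem_Icc.2 htu, rfl⟩

theorem exists_comp_fract_eq_of_ne (hβ : β 0 = β 1) {x y : X} (hx : x ∈ β '' Icc 0 1)
    (hy : y ∈ β '' Icc 0 1) (hxy : x ≠ y) :
    ∃ s ∈ Icc (0 : ℝ) 1, ∃ t ∈ Ioo s (s + 1), (β ∘ Int.fract) s = x ∧ (β ∘ Int.fract) t = y := by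
  rw [← range_comp_fract hβ] at hx hy
  obtain ⟨u, rfl⟩ := hx
  obtain ⟨v, rfl⟩ := hy
  obtain ⟨s, hs, hus⟩ := (periodic_comp_fract β).exists_mem_Ico₀ one_pos u
  obtain ⟨t, ht, hvt⟩ := (periodic_comp_fract β).exists_mem_Ico one_pos v s
  refine ⟨s, Ico_subset_Icc_self hs, t, ⟨ht.1.lt_of_ne ?_, ht.2⟩, hus.symm, hvt.symm⟩
  rintro rfl
  exact hxy (hus.trans hvt.symm)

theorem eVariationOn_loop_eq_add [EMetricSpace X] (hβc : Continuous β) (hβ : β 0 = β 1)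
    (hβi : InjOn β (Ico 0 1)) {f g : ℝ → X} {a b c d : ℝ} (hab : a < b) (hcd : c ≤ d)
    (hfc : ContinuousOn f (Icc a b)) (hfi : InjOn f (Icc a b))
    (hgc : ContinuousOn g (Icc c d)) (hgi : InjOn g (Icc c d))
    (hfga : f a = g c) (hfgb : f b = g d)
    (him : β '' Icc 0 1 = f '' Icc a b ∪ g '' Icc c d) :
    eVariationOn β (Icc 0 1) = eVariationOn f (Icc a b) + eVariationOn g (Icc c d) := by
  have ha := left_mem_Icc.2 hab.le
  have hb := right_mem_Icc.2 hab.le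
  obtain ⟨s, hs, t, ht, hPs, hPt⟩ := exists_comp_fract_eq_of_ne hβ
    (him ▸ .inl (mem_image_of_mem f ha)) (him ▸ .inl (mem_image_of_mem f hb))
    ((hfi.ne_iff ha hb).2 hab.ne)
  -- `P` unrolls the loop into a 1-periodic curve, on which the two arcs of the loop between
  -- `f a` and `f b` are `P` restricted to `[s, t]` and to `[t, s + 1]`.
  set P := β ∘ Int.fract
  have hPc : Continuous P := hβc.continuousOn.comp_fract'' hβ
  have hPs₁ : P (s + 1) = P s := periodic_comp_fract β s
  have hPi : InjOn P (Ico s (s + 1)) := injOn_comp_fract hβi fun x hx y hy =>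
    abs_sub_lt_iff.2 ⟨by linarith [hx.2, hy.1], by linarith [hx.1, hy.2]⟩
  have hPi₂ : InjOn P (Icc t (s + 1)) := injOn_comp_fract hβi fun x hx y hy =>
    abs_sub_lt_iff.2 ⟨by linarith [hx.2, hy.1, ht.1], by linarith [hx.1, hy.2, ht.1]⟩
  have hPi₁ : InjOn P (Icc s t) := hPi.mono (Icc_subset_Ico_right ht.2)
  have hvar : eVariationOn β (Icc 0 1) =
      eVariationOn P (Icc s t) + eVariationOn P (Icc t (s + 1)) := by
    rw [eVariationOn_Icc_add_Icc P ht.1.le ht.2.le,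
      (periodic_comp_fract β).eVariationOn_Icc_add hs,
      eVariationOn.eq_of_eqOn (eqOn_comp_fract_Icc hβ)]
  have hunion : P '' Icc s t ∪ P '' Icc t (s + 1) = f '' Icc a b ∪ g '' Icc c d := by
    rw [← image_union, Icc_union_Icc_eq_Icc ht.1.le ht.2.le,
      (periodic_comp_fract β).image_Icc one_pos, range_comp_fract hβ, him]
  have hinter : P '' Icc s t ∩ P '' Icc t (s + 1) = {f a, f b} := by
    rw [image_Icc_inter_image_Icc_of_injOn_Ico hPi hPs₁ ht.1.le ht.2.le, hPs, hPt]
  have hT₂ := hgc.isPreconnected_image_Icc_sdiff_pair hcd hgi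
  have hS₁ := hPi₁.nonempty_image_Icc_sdiff_pair ht.1
  have hS₂ := hPi₂.nonempty_image_Icc_sdiff_pair ht.2
  rw [hPs, hPt] at hS₁
  rw [hPt, hPs₁, hPs, pair_comm] at hS₂
  rw [← hfga, ← hfgb] at hT₂
  rcases eq_and_eq_or_eq_and_eq_of_union_eq (isCompact_Icc.image hPc).isClosed
    (isCompact_Icc.image hPc).isClosed hinter hunion
    (pair_subset_image_Icc f hab.le) (hfga ▸ hfgb ▸ pair_subset_image_Icc g hcd)
    (hfc.isPreconnected_image_Icc_sdiff_pair hab.le hfi) hT₂ hS₁ hS₂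
    with ⟨h₁, h₂⟩ | ⟨h₁, h₂⟩
  · rw [hvar, eVariationOn_Icc_eq_of_injOn_of_image_eq ht.1.le hPc.continuousOn hPi₁ hfc hfi h₁,
      eVariationOn_Icc_eq_of_injOn_of_image_eq ht.2.le hPc.continuousOn hPi₂ hgc hgi h₂]
  · rw [hvar, add_comm,
      eVariationOn_Icc_eq_of_injOn_of_image_eq ht.1.le hPc.continuousOn hPi₁ hgc hgi h₁,
      eVariationOn_Icc_eq_of_injOn_of_image_eq ht.2.le hPc.continuousOn hPi₂ hfc hfi h₂]

end Loop

theorem convex_arc_attains_equality_general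
    (K : Set (EuclideanSpace ℝ (Fin 2)))
    (hKcomp : IsCompact K)
    (A B : EuclideanSpace ℝ (Fin 2))
    (hdiam : dist A B = Metric.diam K)
    (γ : Set (EuclideanSpace ℝ (Fin 2)))
    (hfront : frontier K = γ ∪ segment ℝ A B)
    (φ : ℝ → EuclideanSpace ℝ (Fin 2)) (hφcont : ContinuousOn φ (Set.Icc (0:ℝ) 1))
    (hφ0 : φ 0 = A) (hφ1 : φ 1 = B)
    (hφinj : Set.InjOn φ (Set.Icc (0:ℝ) 1))
    (hφim : φ '' Set.Icc (0:ℝ) 1 = γ)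
    (β : ℝ → EuclideanSpace ℝ (Fin 2)) (hβcont : Continuous β)
    (hβcycle : β 0 = β 1) (hβinj : Set.InjOn β (Set.Ico (0:ℝ) 1))
    (hβim : β '' Set.Icc (0:ℝ) 1 = frontier K) :
    K ⊆ convexHull ℝ γ ∧
    eVariationOn φ (Set.Icc (0:ℝ) 1) =
      eVariationOn β (Set.Icc (0:ℝ) 1) - ENNReal.ofReal (Metric.diam K) := by
  have h0 := left_mem_Icc.2 (zero_le_one' ℝ)
  have h1 := right_mem_Icc.2 (zero_le_one' ℝ)
  have hAγ : A ∈ γ := hφim ▸ ⟨0, h0, hφ0⟩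
  have hBγ : B ∈ γ := hφim ▸ ⟨1, h1, hφ1⟩
  have hAB : A ≠ B := fun h => zero_ne_one (hφinj h0 h1 (by rw [hφ0, hφ1, h]))
  refine ⟨hKcomp.subset_convexHull_frontier.trans (convexHull_min ?_ (convex_convexHull ℝ γ)), ?_⟩
  · rw [hfront]
    exact union_subset (subset_convexHull ℝ γ) (segment_subset_convexHull hAγ hBγ)
  have hloop := eVariationOn_loop_eq_add hβcont hβcycle hβinj zero_lt_one zero_le_one
    hφcont hφinj AffineMap.lineMap_continuous.continuousOn (AffineMap.lineMap_injective ℝ hAB).injOn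
    (by rw [hφ0, AffineMap.lineMap_apply_zero]) (by rw [hφ1, AffineMap.lineMap_apply_one])
    (by rw [hβim, hfront, hφim, segment_eq_image_lineMap])
  rw [← hdiam, ← edist_dist, hloop, eVariationOn_lineMap_Icc,
    ENNReal.add_sub_cancel_right (edist_ne_top A B)]

/-- Example 1 of the paper / equality case attained: If
`bd(K) = γ ∪ [A,B]` with `A, B ∈ K`, `dist(A,B) = diam(K)`, and `φ` is an
injective parametrization of `γ` from `A` to `B`, then `K ⊆ conv(γ)` and
`length(φ) = per(K) − diam(K)`. -/
theorem convex_arc_attains_equality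
    (K : Set (EuclideanSpace ℝ (Fin 2)))
    (hKcomp : IsCompact K) (hKconv : Convex ℝ K) (hKint : (interior K).Nonempty)
    (A B : EuclideanSpace ℝ (Fin 2)) (hA : A ∈ K) (hB : B ∈ K)
    (hdiam : dist A B = Metric.diam K)
    (γ : Set (EuclideanSpace ℝ (Fin 2)))
    (hγsub : γ ⊆ frontier K)
    (hfront : frontier K = γ ∪ segment ℝ A B)
    (φ : ℝ → EuclideanSpace ℝ (Fin 2)) (hφcont : ContinuousOn φ (Set.Icc (0:ℝ) 1))
    (hφ0 : φ 0 = A) (hφ1 : φ 1 = B)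
    (hφinj : Set.InjOn φ (Set.Icc (0:ℝ) 1))
    (hφim : φ '' Set.Icc (0:ℝ) 1 = γ)
    (β : ℝ → EuclideanSpace ℝ (Fin 2)) (hβcont : Continuous β)
    (hβcycle : β 0 = β 1) (hβinj : Set.InjOn β (Set.Ico (0:ℝ) 1))
    (hβim : β '' Set.Icc (0:ℝ) 1 = frontier K) :
    K ⊆ convexHull ℝ γ ∧
    eVariationOn φ (Set.Icc (0:ℝ) 1) =
      eVariationOn β (Set.Icc (0:ℝ) 1) - ENNReal.ofReal (Metric.diam K) :=
  convex_arc_attains_equality_general K hKcomp A B hdiam γ hfront φ hφcont hφ0 hφ1 hφinj hφim β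
    hβcont hβcycle hβinj hβim
end
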